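/- Let C be a linear code over GF(q) of length n with parity check matrix H having columns h_1,...,h_n, all nonzero. Define i ≡ j iff h_i and h_j are linearly dependent over GF(q). Then ≡ is an equivalence relation on {1,...,n}. Moreover, if C is completely regular with intersection number γ_1 (the number of neighbors of e_1 in C, where all-weight-one words lie at distance 1 from C), then every equivalence class of ≡ has size exactly γ_1. -/

import Mathlib

open SimpleGraph

/-- The Hamming graph on `Fin n → Q`: words adjacent iff they differ in one coordinate. -/
def hammingGraph (n : ℕ) (Q : Type*) [DecidableEq Q] : SimpleGraph (Fin n → Q) where
  Adj x y := hammingDist x y = 1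
  symm := ⟨fun x y h => by (try simp only at h ⊢); rwa [hammingDist_comm]⟩
  loopless := ⟨fun x h => by (try simp only at h); rw [hammingDist_self] at h; exact absurd h.symm one_ne_zero⟩

/-- Distance from a vertex to a code, via graph distance. -/
noncomputable def distToCode {V : Type*} (G : SimpleGraph V) (C : Set V) (x : V) : ℕ :=
  sInf {d | ∃ c ∈ C, G.dist x c = d}

/-- The `i`-th cell of the distance partition of a code. -/
noncomputable def codeCell {V : Type*} (G : SimpleGraph V) (C : Set V) (i : ℕ) : Set V :=
  {x | distToCode G C x = i}

/-- The number of neighbors of `x` lying in `S`. -/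
noncomputable def nbrCount {V : Type*} (G : SimpleGraph V) (x : V) (S : Set V) : ℕ :=
  (G.neighborSet x ∩ S).ncard

/-- Covering radius of a code. -/
noncomputable def covRad {V : Type*} (G : SimpleGraph V) (C : Set V) : ℕ :=
  sSup {d | ∃ x, distToCode G C x = d}

/-- A code is completely regular if its distance partition is equitable. -/
def IsCompRegCode {V : Type*} (G : SimpleGraph V) (C : Set V) : Prop :=
  ∀ i j : ℕ, ∀ x ∈ codeCell G C i, ∀ y ∈ codeCell G C i,
    nbrCount G x (codeCell G C j) = nbrCount G y (codeCell G C j)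

/-- Intersection numbers `γ, α, β` of a code with covering radius `ρ`. -/
def HasIntNums {V : Type*} (G : SimpleGraph V) (C : Set V) (ρ : ℕ) (γ α β : ℕ → ℕ) : Prop :=
  γ 0 = 0 ∧ β ρ = 0 ∧
  ∀ i ≤ ρ, ∀ x ∈ codeCell G C i,
    (1 ≤ i → nbrCount G x (codeCell G C (i-1)) = γ i) ∧
    nbrCount G x (codeCell G C i) = α i ∧
    (i < ρ → nbrCount G x (codeCell G C (i+1)) = β i)

/-- Equitable partition of the vertex set of a graph. -/
def IsEquitable {V : Type*} (G : SimpleGraph V) (Pa : Set (Set V)) : Prop :=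
  ∀ P ∈ Pa, ∀ P' ∈ Pa, ∀ x ∈ P, ∀ y ∈ P, nbrCount G x P' = nbrCount G y P'

/-- Quotient graph of a graph by a partition of its vertex set. -/
def quotientGraph {V : Type*} (G : SimpleGraph V) (Pa : Set (Set V)) : SimpleGraph Pa where
  Adj P P' := P ≠ P' ∧ ∃ x ∈ (P : Set V), ∃ y ∈ (P' : Set V), G.Adj x y
  symm := by
    constructor
    rintro P P' ⟨hne, x, hx, y, hy, hxy⟩
    exact ⟨hne.symm, y, hy, x, hx, hxy.symm⟩
  loopless := by constructor; rintro P ⟨hne, -⟩; exact hne rfl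

/-- Completely regular partition with common intersection numbers. -/
def IsCompRegPartition {V : Type*} (G : SimpleGraph V) (Pa : Set (Set V))
    (ρ : ℕ) (γ α β : ℕ → ℕ) : Prop :=
  Setoid.IsPartition Pa ∧ IsEquitable G Pa ∧
    ∀ P ∈ Pa, IsCompRegCode G P ∧ covRad G P = ρ ∧ HasIntNums G P ρ γ α β

/-- Distance-regular graph of diameter `D` with intersection arrays `b`, `c`. -/
def IsDistRegular {V : Type*} (G : SimpleGraph V) (D : ℕ) (b c : ℕ → ℕ) : Prop :=
  G.Connected ∧ (∀ x y : V, G.dist x y ≤ D) ∧ (∃ x y : V, G.dist x y = D) ∧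
  ∀ i ≤ D, ∀ x y : V, G.dist x y = i →
    (1 ≤ i → nbrCount G y {z | G.dist x z = i - 1} = c i) ∧
    (i < D → nbrCount G y {z | G.dist x z = i + 1} = b i)

/-- The tridiagonal quotient matrix of a completely regular code. -/
noncomputable def quotMatrix (ρ : ℕ) (γ α β : ℕ → ℕ) : Matrix (Fin (ρ+1)) (Fin (ρ+1)) ℝ :=
  Matrix.of fun i j =>
    if (j : ℕ) + 1 = (i : ℕ) then (γ (i : ℕ) : ℝ)
    else if (i : ℕ) = (j : ℕ) then (α (i : ℕ) : ℝ)
    else if (i : ℕ) + 1 = (j : ℕ) then (β (i : ℕ) : ℝ)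
    else 0

open scoped Matrix

/-!
The unit word `e_i` is at distance one from `C`: it is adjacent to `0 ∈ C` and `H e_i = h_i ≠ 0`.
So it has exactly `γ₁` neighbours in `C`. These are the words `e_i + d e_j` with `d ≠ 0` and
`h_i + d h_j = 0`; such a `d` exists exactly when `h_j` is a nonzero multiple of `h_i`, and it is
unique because `h_j ≠ 0`. Hence `j ↦ e_i + d e_j` is a bijection from the class of `i` onto the
neighbours of `e_i` in `C`.
-/

theorem equivalence_exists_smul_eq {G α ι : Type*} [GroupWithZero G] [MulAction G α]
    (v : ι → α) : Equivalence fun i j => ∃ c : G, c ≠ 0 ∧ v i = c • v j where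
  refl _ := ⟨1, one_ne_zero, (one_smul G _).symm⟩
  symm := by
    rintro i j ⟨c, hc, h⟩
    exact ⟨c⁻¹, inv_ne_zero hc, by rw [h, smul_smul, inv_mul_cancel₀ hc, one_smul]⟩
  trans := by
    rintro i j k ⟨c, hc, hij⟩ ⟨c', hc', hjk⟩
    exact ⟨c * c', mul_ne_zero hc hc', by rw [hij, hjk, smul_smul]⟩

section Module

variable {K M : Type*} [Field K] [AddCommGroup M] [Module K M]

theorem exists_smul_eq_iff_exists_add_smul_eq_zero {u v : M} :
    (∃ c : K, c ≠ 0 ∧ v = c • u) ↔ ∃ d : K, d ≠ 0 ∧ u + d • v = 0 := by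
  constructor
  · rintro ⟨c, hc, rfl⟩
    refine ⟨-c⁻¹, by simpa using hc, ?_⟩
    rw [smul_smul, neg_mul, inv_mul_cancel₀ hc, neg_one_smul, add_neg_cancel]
  · rintro ⟨d, hd, h⟩
    refine ⟨-d⁻¹, by simpa using hd, ?_⟩
    rw [eq_neg_of_add_eq_zero_left h, smul_neg, neg_smul, neg_neg, smul_smul,
      inv_mul_cancel₀ hd, one_smul]

theorem eq_of_add_smul_eq_zero {u v : M} (hv : v ≠ 0) {d d' : K}
    (h : u + d • v = 0) (h' : u + d' • v = 0) : d = d' :=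
  smul_left_injective K hv (add_left_cancel (h.trans h'.symm))

end Module

section HammingDist

variable {ι β : Type*} [DecidableEq ι]

theorem injOn_add_single [AddGroup β] (x : ι → β) :
    Set.InjOn (fun p : ι × β => x + Pi.single p.1 p.2) {p | p.2 ≠ 0} := by
  rintro ⟨j, d⟩ hd ⟨j', d'⟩ - h
  have hsingle : (Pi.single j d : ι → β) = Pi.single j' d' := add_left_cancel h
  obtain rfl : j = j' := by
    by_contra hne
    exact hd (by simpa [Ne.symm hne] using congrFun hsingle j)
  rw [Pi.single_injective j hsingle]

section Fintype

variable [Fintype ι] [DecidableEq β]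

theorem hammingNorm_eq_one_iff [Zero β] {z : ι → β} :
    hammingNorm z = 1 ↔ ∃ j d, d ≠ 0 ∧ z = Pi.single j d := by
  constructor
  · intro h
    obtain ⟨j, hj⟩ := Finset.card_eq_one.mp h
    have hsupp : ∀ k, z k ≠ 0 ↔ k = j := fun k => by
      simpa using Finset.ext_iff.mp hj k
    refine ⟨j, z j, (hsupp j).2 rfl, funext fun k => ?_⟩
    by_cases hk : k = j
    · simp [hk]
    · simpa [hk] using (hsupp k).not.2 hk
  · rintro ⟨j, d, hd, rfl⟩
    refine Finset.card_eq_one.mpr ⟨j, ?_⟩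
    ext k
    by_cases hk : k = j <;> simp [hk, hd]

theorem hammingDist_eq_one_iff_exists_add_single [AddGroup β] {x y : ι → β} :
    hammingDist x y = 1 ↔ ∃ j d, d ≠ 0 ∧ y = x + Pi.single j d := by
  simp_rw [hammingDist_eq_hammingNorm, hammingNorm_eq_one_iff, neg_add_eq_iff_eq_add]

end Fintype

end HammingDist

theorem hammingGraph_preconnected (n : ℕ) (Q : Type*) [DecidableEq Q] :
    (hammingGraph n Q).Preconnected := by
  suffices ∀ k (x y : Fin n → Q), hammingDist x y = k → (hammingGraph n Q).Reachable x y from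
    fun x y => this _ x y rfl
  intro k
  induction k with
  | zero => intro x y h; rw [hammingDist_eq_zero.mp h]
  | succ k ih =>
    intro x y h
    obtain ⟨j, hj⟩ : ∃ j, x j ≠ y j := Function.ne_iff.mp (hammingDist_ne_zero.mp (by omega))
    have hadj : (hammingGraph n Q).Adj x (Function.update x j (y j)) := by
      refine Finset.card_eq_one.mpr ⟨j, ?_⟩
      ext k
      by_cases hk : k = j <;> simp [Function.update_apply, hk, hj]
    have hcloser : hammingDist (Function.update x j (y j)) y + 1 = hammingDist x y := by
      have hmem : j ∈ Finset.univ.filter fun k => x k ≠ y k := by simpa using hj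
      rw [hammingDist, hammingDist, ← Finset.card_erase_add_one hmem]
      congr 2
      ext k
      by_cases hk : k = j <;> simp [Function.update_apply, hk]
    exact hadj.reachable.trans (ih _ _ (by omega))

theorem neighborSet_hammingGraph_inter {n : ℕ} {Q : Type*} [DecidableEq Q] [AddGroup Q]
    (x : Fin n → Q) (C : Set (Fin n → Q)) :
    (hammingGraph n Q).neighborSet x ∩ C =
      (fun p : Fin n × Q => x + Pi.single p.1 p.2) '' {p | p.2 ≠ 0 ∧ x + Pi.single p.1 p.2 ∈ C} := by
  ext y
  simp only [Set.mem_inter_iff, mem_neighborSet, Set.mem_image, Set.mem_ofPred_eq, Prod.exists]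
  change hammingDist x y = 1 ∧ y ∈ C ↔ _
  rw [hammingDist_eq_one_iff_exists_add_single]
  constructor
  · rintro ⟨⟨j, d, hd, rfl⟩, hy⟩
    exact ⟨j, d, ⟨hd, hy⟩, rfl⟩
  · rintro ⟨j, d, ⟨hd, hy⟩, rfl⟩
    exact ⟨⟨j, d, hd, rfl⟩, hy⟩

theorem nbrCount_hammingGraph {n : ℕ} {Q : Type*} [DecidableEq Q] [AddGroup Q]
    (x : Fin n → Q) (C : Set (Fin n → Q)) :
    nbrCount (hammingGraph n Q) x C = {p : Fin n × Q | p.2 ≠ 0 ∧ x + Pi.single p.1 p.2 ∈ C}.ncard := by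
  rw [nbrCount, neighborSet_hammingGraph_inter,
    ((injOn_add_single x).mono fun _ hp => hp.1).ncard_image]

theorem distToCode_eq_one {V : Type*} {G : SimpleGraph V} {C : Set V} {x c : V}
    (hG : G.Preconnected) (hx : x ∉ C) (hc : c ∈ C) (hadj : G.Adj x c) :
    distToCode G C x = 1 := by
  have hmem : 1 ∈ {d | ∃ c ∈ C, G.dist x c = d} := ⟨c, hc, dist_eq_one_iff_adj.mpr hadj⟩
  refine le_antisymm (Nat.sInf_le hmem) (le_csInf ⟨1, hmem⟩ ?_)
  rintro _ ⟨c', hc', rfl⟩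
  exact (hG x c').pos_dist_of_ne fun h => hx (h ▸ hc')

theorem nbrCount_single_one_ker {K : Type*} [Field K] [DecidableEq K] {m : Type*} {n : ℕ}
    (H : Matrix m (Fin n) K) (hcols : ∀ j, H.col j ≠ 0) (i : Fin n) :
    nbrCount (hammingGraph n K) (Pi.single i 1) {x | H *ᵥ x = 0} =
      {j | ∃ c : K, c ≠ 0 ∧ H.col j = c • H.col i}.ncard := by
  have hker : ∀ j (d : K), H *ᵥ (Pi.single i 1 + Pi.single j d) = H.col i + d • H.col j := by
    intro j d
    rw [Matrix.mulVec_add, Matrix.mulVec_single_one, Matrix.mulVec_single, op_smul_eq_smul]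
  have hclass : {j | ∃ c : K, c ≠ 0 ∧ H.col j = c • H.col i} =
      Prod.fst '' {p : Fin n × K | p.2 ≠ 0 ∧ H.col i + p.2 • H.col p.1 = 0} := by
    ext j
    simp [exists_smul_eq_iff_exists_add_smul_eq_zero]
  simp only [nbrCount_hammingGraph, Set.mem_ofPred_eq, hker, hclass]
  refine (Set.InjOn.ncard_image ?_).symm
  rintro ⟨j, d⟩ ⟨-, h⟩ ⟨j', d'⟩ ⟨-, h'⟩ (rfl : j = j')
  exact congrArg (Prod.mk j) (eq_of_add_smul_eq_zero (hcols j) h h')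

theorem parity_check_column_classes_general {F : Type*} [Field F] [DecidableEq F]
    {r n : ℕ} (H : Matrix (Fin r) (Fin n) F)
    (hcols : ∀ j : Fin n, (fun i => H i j) ≠ 0)
    (C : Set (Fin n → F)) (hC : C = {x | H.mulVec x = 0})
    (γ1 : ℕ)
    (hγ1 : ∀ x, distToCode (hammingGraph n F) C x = 1 →
      nbrCount (hammingGraph n F) x C = γ1) :
    Equivalence (fun i j : Fin n => ∃ c : F, c ≠ 0 ∧ (fun r' => H r' i) = c • (fun r' => H r' j)) ∧
    ∀ i : Fin n,
      {j : Fin n | ∃ c : F, c ≠ 0 ∧ (fun r' => H r' j) = c • (fun r' => H r' i)}.ncard = γ1 := by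
  refine ⟨equivalence_exists_smul_eq H.col, fun i => ?_⟩
  subst hC
  have hnot : (Pi.single i 1 : Fin n → F) ∉ {x | H *ᵥ x = 0} := by
    change ¬H *ᵥ Pi.single i 1 = 0
    rw [Matrix.mulVec_single_one]
    exact hcols i
  have hadj : (hammingGraph n F).Adj (Pi.single i 1) 0 := by
    change hammingDist _ _ = 1
    rw [hammingDist_zero_right, hammingNorm_eq_one_iff]
    exact ⟨i, 1, one_ne_zero, rfl⟩
  have hdist := distToCode_eq_one (hammingGraph_preconnected n F) hnot (by simp) hadj
  rw [← hγ1 _ hdist]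
  exact (nbrCount_single_one_ker H hcols i).symm

/-- linear dependence of the (nonzero) columns of a parity check matrix
is an equivalence relation, and for a completely regular code each class has size `γ₁`. -/
theorem parity_check_column_classes {F : Type*} [Field F] [Fintype F] [DecidableEq F]
    {r n : ℕ} (H : Matrix (Fin r) (Fin n) F)
    (hcols : ∀ j : Fin n, (fun i => H i j) ≠ 0)
    (C : Set (Fin n → F)) (hC : C = {x | H.mulVec x = 0})
    (γ1 : ℕ)
    (hcr : IsCompRegCode (hammingGraph n F) C)
    (hγ1 : ∀ x, distToCode (hammingGraph n F) C x = 1 →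
      nbrCount (hammingGraph n F) x C = γ1) :
    Equivalence (fun i j : Fin n => ∃ c : F, c ≠ 0 ∧ (fun r' => H r' i) = c • (fun r' => H r' j)) ∧
    ∀ i : Fin n,
      {j : Fin n | ∃ c : F, c ≠ 0 ∧ (fun r' => H r' j) = c • (fun r' => H r' i)}.ncard = γ1 :=
  parity_check_column_classes_general H hcols C hC γ1 hγ1
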